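/- arXiv:2601.20783 — 3 statements merged into one kernel-verified Lean document; each statement's English description precedes it below -/
import Mathlib

section
/- Let C be a set of calls with trace function tr : C → Set C satisfying transitivity (c' ∈ tr(c) and c'' ∈ tr(c') implies c'' ∈ tr(c)). Let X be a set of contracts, p : C → X a parent map, and for each x ∈ X let ≻*_x be an admissible strict partial order on p⁻¹(x), meaning there are no c, c' ∈ p⁻¹(x) with c ≻*_x c' and c' ∈ tr(c). Define the extended relation ≻_x on C by: t ≻_x t' iff either (p(t) = p(t') = x and t ≻*_x t'), or (p(t) = x, p(t') ≠ x, and there exists c ∈ tr(t') with p(c) = x and t ≻*_x c). Then each ≻_x is a strict partial order on C (irreflexive and transitive). -/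
/-- The extended relation of the system R*(p). -/
def extRel {C X : Type*} (tr : C → Set C) (p : C → X)
    (s : X → C → C → Prop) (x : X) (t t' : C) : Prop :=
  (p t = x ∧ p t' = x ∧ s x t t') ∨
  (p t = x ∧ p t' ≠ x ∧ ∃ c ∈ tr t', p c = x ∧ s x t c)

/-- If each `s x` is an admissible strict partial order on the fiber `p⁻¹(x)`,
then each extended relation `extRel tr p s x` is a strict partial order on `C`. -/
theorem stmt_6 {C X : Type*} (tr : C → Set C)
    (htr : ∀ c c' c'', c' ∈ tr c → c'' ∈ tr c' → c'' ∈ tr c)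
    (p : C → X) (s : X → C → C → Prop)
    (hfib : ∀ x a b, s x a b → p a = x ∧ p b = x)
    (hirr : ∀ x a, ¬ s x a a)
    (htrans : ∀ x a b c, s x a b → s x b c → s x a c)
    (hadm : ∀ x a b, s x a b → b ∉ tr a) :
    ∀ x : X, (∀ t, ¬ extRel tr p s x t t) ∧
      (∀ t t' t'', extRel tr p s x t t' → extRel tr p s x t' t'' →
        extRel tr p s x t t'') := by
  intro x
  constructor
  · rintro t (⟨_, _, h⟩ | ⟨h1, h2, _⟩)
    · exact hirr x t h
    · exact h2 h1
  · rintro t t' t'' (⟨ht, ht', h⟩ | ⟨ht, ht', c, hc, hpc, h⟩)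
      (⟨ht'2, ht'', h2⟩ | ⟨ht'2, ht'', c2, hc2, hpc2, h2⟩)
    · exact Or.inl ⟨ht, ht'', htrans x _ _ _ h h2⟩
    · exact Or.inr ⟨ht, ht'', c2, hc2, hpc2, htrans x _ _ _ h h2⟩
    · exact absurd ht'2 ht'
    · exact absurd ht'2 ht'
end

section
/- Let ≻ be a binary relation on a countable set C. Then the following are equivalent: (1) for every finite sequence of elements of C there is a bijective reordering B with no i < j such that t_{B(j)} ≻ t_{B(i)}; (2) the transitive closure of ≻ is irreflexive; (3) there exists λ : C → ℚ with c ≻ c' implying λ(c) > λ(c'). -/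
/-!
Sorting a sequence by decreasing `λ` leaves no backward `≻`-step, so (3) gives (1); and `λ`
strictly decreases along `≻`-paths, so (3) gives (2). Along a `≻`-cycle every entry has a
`≻`-successor at another position, while the last entry of a valid reordering has none: so (1)
gives (2). Finally, if the transitive closure is irreflexive then the reflexive transitive closure
is a partial order; a linear extension of it (Szpilrajn) embeds into `ℚ` because `C` is countable,
which gives (3).
-/

open Relation

section

variable {C : Type*} {r : C → C → Prop}

theorem Relation.TransGen.lt_of_forall_rel_lt {α : Type*} [Preorder α] {f : C → α}
    (hf : ∀ a b, r a b → f b < f a) {a b : C} (h : TransGen r a b) : f b < f a := by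
  induction h with
  | single hab => exact hf _ _ hab
  | tail _ hbc ih => exact (hf _ _ hbc).trans ih

theorem exists_perm_forall_lt_not_rel {α : Type*} [LinearOrder α] {f : C → α}
    (hf : ∀ a b, r a b → f b < f a) {N : ℕ} (t : Fin N → C) :
    ∃ B : Equiv.Perm (Fin N), ∀ i j, i < j → ¬ r (t (B j)) (t (B i)) := by
  let g : Fin N → αᵒᵈ := fun i => OrderDual.toDual (f (t i))
  refine ⟨Tuple.sort g, fun i j hij hr => ?_⟩
  have hle : f (t (Tuple.sort g j)) ≤ f (t (Tuple.sort g i)) := Tuple.monotone_sort g hij.le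
  exact (hf _ _ hr).not_ge hle

theorem exists_forall_ne_not_rel_of_forall_lt_not_rel {ι : Type*} [LinearOrder ι] [Finite ι]
    [Nonempty ι] {t : ι → C} (B : Equiv.Perm ι) (hB : ∀ i j, i < j → ¬ r (t (B j)) (t (B i))) :
    ∃ k, ∀ k' ≠ k, ¬ r (t k) (t k') := by
  obtain ⟨k, hk⟩ := Finite.exists_max B.symm
  refine ⟨k, fun k' hne => ?_⟩
  have hlt : B.symm k' < B.symm k := (hk k').lt_of_ne (B.symm.injective.ne hne)
  simpa using hB _ _ hlt

theorem exists_fin_forall_exists_ne_rel_of_transGen_self {c : C} (hc : TransGen r c c) :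
    ∃ (N : ℕ) (t : Fin N → C), 0 < N ∧ ∀ k, ∃ k' ≠ k, r (t k) (t k') := by
  by_cases hcc : r c c
  · exact ⟨2, fun _ => c, two_pos, fun k => (exists_ne k).imp fun _ hk' => ⟨hk', hcc⟩⟩
  obtain ⟨b, hcb, hbc⟩ := TransGen.head'_iff.mp hc
  obtain ⟨l, hchain, hlast⟩ := List.exists_isChain_cons_of_relationReflTransGen hbc
  have hl : l ≠ [] := by
    rintro rfl
    exact hcc (by simpa [← hlast] using hcb)
  have hlen : 2 ≤ (b :: l).length := by
    have := List.length_pos_iff.mpr hl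
    simp only [List.length_cons]
    omega
  refine ⟨(b :: l).length, (b :: l).get, by omega, fun k => ?_⟩
  by_cases hk : (k : ℕ) + 1 < (b :: l).length
  · exact ⟨⟨k + 1, hk⟩, fun h => by simpa using congrArg Fin.val h,
      List.isChain_iff_getElem.mp hchain k hk⟩
  · have hk_last : (b :: l).get k = c := by
      rw [← hlast, List.getLast_eq_getElem]
      simp only [List.get_eq_getElem]
      congr 1
      omega
    refine ⟨⟨0, by omega⟩, fun h => by simp only [Fin.ext_iff] at h; omega, ?_⟩
    rw [hk_last]
    exact hcb

theorem exists_strictMono_rat {α : Type*} [PartialOrder α] [Countable α] :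
    ∃ f : α → ℚ, StrictMono f := by
  have : Countable (LinearExtension α) := inferInstanceAs (Countable α)
  obtain ⟨e⟩ := Order.embedding_from_countable_to_dense (LinearExtension α) ℚ
  exact ⟨e ∘ toLinearExtension, (e.monotone.comp toLinearExtension.monotone).strictMono_of_injective
    (e.injective.comp fun _ _ => id)⟩

theorem exists_rat_forall_rel_lt_of_transGen_irrefl [Countable C]
    (h : ∀ c, ¬ TransGen r c c) : ∃ f : C → ℚ, ∀ a b, r a b → f b < f a := by
  let : PartialOrder C :=
    { le := fun a b => ReflTransGen r b a
      le_refl := fun _ => ReflTransGen.refl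
      le_trans := fun _ _ _ hab hbc => hbc.trans hab
      le_antisymm := fun a b hab hba => by
        rcases reflTransGen_iff_eq_or_transGen.mp hab with heq | hba'
        · exact heq
        · exact absurd (hba'.trans_left hba) (h b) }
  obtain ⟨f, hf⟩ := exists_strictMono_rat (α := C)
  refine ⟨f, fun a b hab => hf (lt_of_le_of_ne (ReflTransGen.single hab) fun hba => ?_)⟩
  exact h a (TransGen.single (hba ▸ hab))

end

/-- For a binary relation on a countable set, the following are equivalent:
(1) every finite sequence admits a valid reordering;
(2) the transitive closure is irreflexive;
(3) there is an order-preserving map into ℚ. -/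
theorem stmt_17 {C : Type*} [Countable C] (r : C → C → Prop) :
    ((∀ (N : ℕ) (t : Fin N → C), ∃ B : Equiv.Perm (Fin N),
        ∀ i j : Fin N, i < j → ¬ r (t (B j)) (t (B i))) ↔
      (∀ c, ¬ Relation.TransGen r c c)) ∧
    ((∀ c, ¬ Relation.TransGen r c c) ↔
      (∃ f : C → ℚ, ∀ c c', r c c' → f c > f c')) := by
  have h32 : (∃ f : C → ℚ, ∀ c c', r c c' → f c > f c') → ∀ c, ¬ TransGen r c c :=
    fun ⟨f, hf⟩ c hc => lt_irrefl _ (hc.lt_of_forall_rel_lt hf)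
  have h23 := exists_rat_forall_rel_lt_of_transGen_irrefl (r := r)
  refine ⟨⟨fun h1 c hc => ?_, fun h2 => ?_⟩, ⟨h23, h32⟩⟩
  · obtain ⟨N, t, hN, hsucc⟩ := exists_fin_forall_exists_ne_rel_of_transGen_self hc
    have : Nonempty (Fin N) := ⟨⟨0, hN⟩⟩
    obtain ⟨B, hB⟩ := h1 N t
    obtain ⟨k, hk⟩ := exists_forall_ne_not_rel_of_forall_lt_not_rel B hB
    obtain ⟨k', hne, hr⟩ := hsucc k
    exact hk k' hne hr
  · obtain ⟨f, hf⟩ := h23 h2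
    exact fun N t => exists_perm_forall_lt_not_rel hf t
end

section
/- Let C be a set with transitive trace tr, X a set of contracts, p, p' : C → X parent maps, and t, t' ∈ C with p'(t) = p(t), p'(t') = p(t'), and p'(c) = p(c) for all c ∈ tr(t) ∪ tr(t'). If t ≻_x t' holds in the extended relation induced by some family of admissible strict partial orders (≻*_y) under p, then there exists a family of admissible strict partial orders under p' whose extended relation ≻'_x satisfies t ≻'_x t'. -/
/-- Independence of Irrelevant Calls for R*: if `t ≻_x t'` under `p` for some
family of admissible strict partial orders on the fibers of `p`, and `p'`
agrees with `p` on `{t, t'} ∪ tr t ∪ tr t'`, then there is a family of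
admissible strict partial orders on the fibers of `p'` whose extended relation
also places `t` before `t'`. -/
theorem stmt_18 {C X : Type*} (tr : C → Set C)
    (htr : ∀ c c' c'', c' ∈ tr c → c'' ∈ tr c' → c'' ∈ tr c)
    (p p' : C → X)
    (s : X → C → C → Prop)
    (hfib : ∀ y a b, s y a b → p a = y ∧ p b = y)
    (hirr : ∀ y a, ¬ s y a a)
    (htrans : ∀ y a b c, s y a b → s y b c → s y a c)
    (hadm : ∀ y a b, s y a b → b ∉ tr a)
    (x : X) (t t' : C)
    (hpt : p' t = p t) (hpt' : p' t' = p t')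
    (hagree : ∀ c ∈ tr t ∪ tr t', p' c = p c)
    (h : extRel tr p s x t t') :
    ∃ s' : X → C → C → Prop,
      (∀ y a b, s' y a b → p' a = y ∧ p' b = y) ∧
      (∀ y a, ¬ s' y a a) ∧
      (∀ y a b c, s' y a b → s' y b c → s' y a c) ∧
      (∀ y a b, s' y a b → b ∉ tr a) ∧
      extRel tr p' s' x t t' := by
  rcases h with ⟨h1, h2, h3⟩ | ⟨h1, h2, c, hc, hpc, hs⟩
  · refine ⟨fun y a b => y = x ∧ a = t ∧ b = t', ?_, ?_, ?_, ?_, ?_⟩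
    · rintro y a b ⟨rfl, rfl, rfl⟩
      exact ⟨hpt.trans h1, hpt'.trans h2⟩
    · rintro y a ⟨rfl, rfl, rfl⟩
      exact hirr _ _ h3
    · rintro y a b c ⟨rfl, rfl, rfl⟩ ⟨-, rfl, -⟩
      exact absurd h3 (hirr _ _)
    · rintro y a b ⟨rfl, rfl, rfl⟩
      exact hadm _ _ _ h3
    · exact Or.inl ⟨hpt.trans h1, hpt'.trans h2, rfl, rfl, rfl⟩
  · refine ⟨fun y a b => y = x ∧ a = t ∧ b = c, ?_, ?_, ?_, ?_, ?_⟩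
    · rintro y a b ⟨rfl, rfl, rfl⟩
      exact ⟨hpt.trans h1, (hagree _ (Or.inr hc)).trans hpc⟩
    · rintro y a ⟨rfl, rfl, rfl⟩
      exact hirr _ _ hs
    · rintro y a b d ⟨rfl, rfl, rfl⟩ ⟨-, rfl, -⟩
      exact absurd hs (hirr _ _)
    · rintro y a b ⟨rfl, rfl, rfl⟩
      exact hadm _ _ _ hs
    · exact Or.inr ⟨hpt.trans h1, hpt'.symm ▸ h2, c, hc,
        (hagree c (Or.inr hc)).trans hpc, rfl, rfl, rfl⟩
end
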